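/- Let κ be a regular cardinal, let (X,u) be a κ-ultrametric space that is κ-compact in the induced topology, and let (Y,d) be a τ-ultrametric space for an arbitrary ordinal τ. Then every continuous map f : X → Y (with respect to the ultrametric topologies) is uniformly continuous. -/

import Mathlib

open Set Function

universe u v

/-- The closed ball of radius `α` and center `x` in an ordinal-valued ultrametric space:
`B_α(x) = {y | u x y ≥ α}`. -/
def Ball {X : Type u} (u : X → X → Ordinal) (α : Ordinal) (x : X) : Set X :=
  {y | α ≤ u x y}

/-- `u` is a `γ`-ultrametric on `X`: it takes values in `γ + 1` (i.e. values `≤ γ`),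
`u x y = γ` iff `x = y`, the ultrametric triangle law, and symmetry. -/
structure IsUltrametric {X : Type u} (γ : Ordinal) (u : X → X → Ordinal) : Prop where
  le_gamma : ∀ x y, u x y ≤ γ
  eq_gamma_iff : ∀ x y, u x y = γ ↔ x = y
  triangle : ∀ x y z, min (u y x) (u x z) ≤ u y z
  symm : ∀ x y, u x y = u y x

/-- The topology induced by a `γ`-ultrametric: the closed balls `B_α(x)`, `α < γ`,
form a base. -/
def ballTopology {X : Type u} (γ : Ordinal) (u : X → X → Ordinal) : TopologicalSpace X :=
  TopologicalSpace.generateFrom {s : Set X | ∃ x α, α < γ ∧ s = Ball u α x}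

/-- `f` is uniformly continuous from the `γX`-ultrametric space `(X, u)` to the
`γY`-ultrametric space `(Y, d)`. -/
def UnifCont {X : Type u} {Y : Type v} (γX γY : Ordinal)
    (u : X → X → Ordinal) (d : Y → Y → Ordinal) (f : X → Y) : Prop :=
  ∀ ε < γY, ∃ δ < γX, ∀ a b, δ ≤ u a b → ε ≤ d (f a) (f b)

/-- A discrete set regarded as a `γ`-ultrametric space. -/
noncomputable def discreteUltra {X : Type u} (γ : Ordinal) (a b : X) : Ordinal :=
  @ite _ (a = b) (Classical.propDecidable _) γ 0

/-- `A` is uniformly nowhere dense in the `γ`-ultrametric space `(X, u)`. -/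
def UnifNwd {X : Type u} (γ : Ordinal) (u : X → X → Ordinal) (A : Set X) : Prop :=
  ∀ α < γ, ∃ β, α < β ∧ β < γ ∧ ∀ b : X, ∃ a ∈ Ball u α b, Ball u β a ∩ A = ∅

/-- The space `κ^λ` of functions from (the ordinals below) `λ` to (the ordinals below) `κ`. -/
def funSpace (κ lam : Cardinal.{0}) : Type 1 :=
  ↥(Set.Iio lam.ord) → ↥(Set.Iio κ.ord)

/-- The canonical `λ`-ultrametric on `κ^λ`: `u(a,b) = sup {α < λ : a↾α = b↾α}`. -/
noncomputable def funUltra (κ lam : Cardinal.{0}) (a b : funSpace κ lam) : Ordinal :=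
  sSup {α : Ordinal | α < lam.ord ∧ ∀ β : ↥(Set.Iio lam.ord), (β : Ordinal) < α → a β = b β}

noncomputable instance (κ lam : Cardinal.{0}) : TopologicalSpace (funSpace κ lam) :=
  ballTopology lam.ord (funUltra κ lam)

/-- The space `X` with topology `t` has weight (least cardinality of a base) at most `c`. -/
def WeightLE (X : Type u) (t : TopologicalSpace X) (c : Cardinal.{0}) : Prop :=
  ∃ B : Set (Set X), t.IsTopologicalBasis B ∧ Cardinal.mk B ≤ Cardinal.lift.{u} c

/-- The generalized Cantor space `2^κ` of functions from (the ordinals below) `κ` to `{0,1}`. -/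
def cantor (κ : Cardinal.{0}) : Type 1 := ↥(Set.Iio κ.ord) → Bool

/-- The canonical `κ`-ultrametric on `2^κ`: `u(a,b) = sup {α < κ : a↾α = b↾α}`. -/
noncomputable def cantorUltra (κ : Cardinal.{0}) (a b : cantor κ) : Ordinal :=
  sSup {α : Ordinal | α < κ.ord ∧ ∀ β : ↥(Set.Iio κ.ord), (β : Ordinal) < α → a β = b β}

noncomputable instance (κ : Cardinal.{0}) : TopologicalSpace (cantor κ) :=
  ballTopology κ.ord (cantorUltra κ)

/-- `κ` is weakly compact: it is uncountable and has the Ramsey property `κ → (κ)²`. -/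
def WeaklyCompact (κ : Cardinal.{0}) : Prop :=
  Cardinal.aleph0 < κ ∧
  ∀ f : ↥(Set.Iio κ.ord) → ↥(Set.Iio κ.ord) → Bool,
    ∃ (i : Bool) (A : Set ↥(Set.Iio κ.ord)), Cardinal.mk A = Cardinal.lift.{1} κ ∧
      ∀ a ∈ A, ∀ b ∈ A, a < b → f a b = i

/-- A space is `κ`-compact if every open cover has a subcover of size `< κ`. -/
def KappaCompact (X : Type u) (t : TopologicalSpace X) (κ : Cardinal.{0}) : Prop :=
  ∀ C : Set (Set X), (∀ s ∈ C, t.IsOpen s) → ⋃₀ C = Set.univ →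
    ∃ D ⊆ C, Cardinal.mk D < Cardinal.lift.{u} κ ∧ ⋃₀ D = Set.univ

/-! A Lebesgue-number argument. Continuity gives around each point a ball on which `f` moves
by less than `ε`; by `κ`-compactness fewer than `κ` of these balls cover `X`, so by regularity
of `κ` their radii are bounded by some `δ < κ`. In an ultrametric space a ball of radius `≤ δ`
containing `a` contains all of `B_δ(a)`, and `δ` witnesses uniform continuity. -/

theorem isOpen_ball {X : Type u} {γ : Ordinal} {u : X → X → Ordinal} {α : Ordinal}
    (hα : α < γ) (x : X) : (ballTopology γ u).IsOpen (Ball u α x) :=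
  TopologicalSpace.isOpen_generateFrom_of_mem ⟨x, α, hα, rfl⟩

theorem ball_anti {X : Type u} {u : X → X → Ordinal} {α β : Ordinal} (hαβ : α ≤ β) (x : X) :
    Ball u β x ⊆ Ball u α x :=
  fun _ hy => hαβ.trans hy

namespace IsUltrametric

variable {X : Type u} {γ : Ordinal} {u : X → X → Ordinal}

theorem mem_ball_self (hu : IsUltrametric γ u) {α : Ordinal} (hα : α ≤ γ) (x : X) :
    x ∈ Ball u α x := by
  show α ≤ u x x
  rwa [(hu.eq_gamma_iff x x).2 rfl]

theorem ball_subset_ball_of_mem (hu : IsUltrametric γ u) {α : Ordinal} {x y : X}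
    (hy : y ∈ Ball u α x) : Ball u α y ⊆ Ball u α x :=
  fun z hz => (le_min hy hz).trans (hu.triangle y x z)

theorem le_of_mem_ball (hu : IsUltrametric γ u) {α : Ordinal} {x y z : X}
    (hy : y ∈ Ball u α x) (hz : z ∈ Ball u α x) : α ≤ u y z :=
  (le_min (hu.symm x y ▸ hy) hz).trans (hu.triangle x y z)

theorem isTopologicalBasis_balls (hu : IsUltrametric γ u) (hγ : 0 < γ) :
    @TopologicalSpace.IsTopologicalBasis X (ballTopology γ u)
      {s | ∃ x α, α < γ ∧ s = Ball u α x} := by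
  refine @TopologicalSpace.IsTopologicalBasis.mk X (ballTopology γ u) _ ?_ ?_ rfl
  · rintro _ ⟨x, α, hα, rfl⟩ _ ⟨y, β, hβ, rfl⟩ z ⟨hzx, hzy⟩
    refine ⟨Ball u (max α β) z, ⟨z, _, max_lt hα hβ, rfl⟩,
      hu.mem_ball_self (max_lt hα hβ).le z, fun w hw => ⟨?_, ?_⟩⟩
    · exact hu.ball_subset_ball_of_mem hzx (ball_anti (le_max_left α β) z hw)
    · exact hu.ball_subset_ball_of_mem hzy (ball_anti (le_max_right α β) z hw)
  · exact eq_univ_of_forall fun x => ⟨_, ⟨x, 0, hγ, rfl⟩, hu.mem_ball_self hγ.le x⟩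

theorem exists_ball_subset_preimage_ball (hu : IsUltrametric γ u) (hγ : 0 < γ)
    {Y : Type v} {τ : Ordinal} {d : Y → Y → Ordinal} (hd : IsUltrametric τ d) {f : X → Y}
    (hf : @Continuous X Y (ballTopology γ u) (ballTopology τ d) f) {ε : Ordinal} (hε : ε < τ)
    (x : X) : ∃ α < γ, Ball u α x ⊆ f ⁻¹' Ball d ε (f x) := by
  have hx : x ∈ f ⁻¹' Ball d ε (f x) := hd.mem_ball_self hε.le (f x)
  obtain ⟨_, ⟨z, α, hα, rfl⟩, hxz, hsub⟩ :=
    @TopologicalSpace.IsTopologicalBasis.exists_subset_of_mem_open X (ballTopology γ u) _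
      (hu.isTopologicalBasis_balls hγ) x _ hx
      (@IsOpen.preimage X Y (ballTopology γ u) (ballTopology τ d) f hf _ (isOpen_ball hε (f x)))
  exact ⟨α, hα, (hu.ball_subset_ball_of_mem hxz).trans hsub⟩

end IsUltrametric

theorem KappaCompact.exists_small_subcover {X : Type u} {t : TopologicalSpace X}
    {κ : Cardinal.{0}} (hc : KappaCompact X t κ) (U : X → Set X) (hU : ∀ x, t.IsOpen (U x))
    (hxU : ∀ x, x ∈ U x) :
    ∃ S : Set X, Cardinal.mk S < Cardinal.lift.{u} κ ∧ ∀ a, ∃ x ∈ S, a ∈ U x := by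
  obtain ⟨D, hDU, hDcard, hDcover⟩ := hc (range U) (by rintro _ ⟨x, rfl⟩; exact hU x)
    (eq_univ_of_forall fun x => ⟨U x, ⟨x, rfl⟩, hxU x⟩)
  choose center hcenter using fun s : D => hDU s.2
  refine ⟨range center, Cardinal.mk_range_le.trans_lt hDcard, fun a => ?_⟩
  obtain ⟨s, hsD, has⟩ := hDcover.symm ▸ mem_univ a
  exact ⟨center ⟨s, hsD⟩, mem_range_self _, (hcenter ⟨s, hsD⟩).symm ▸ has⟩

theorem Cardinal.IsRegular.exists_upper_bound_lt_ord {κ : Cardinal.{v}} (hκ : κ.IsRegular)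
    {ι : Type u} (hι : Cardinal.lift.{v} (Cardinal.mk ι) < Cardinal.lift.{u} κ)
    (f : ι → Ordinal.{v}) (hf : ∀ i, f i < κ.ord) : ∃ δ < κ.ord, ∀ i, f i ≤ δ := by
  have hbdd : BddAbove (range f) := ⟨κ.ord, by rintro _ ⟨i, rfl⟩; exact (hf i).le⟩
  refine ⟨⨆ i, f i, Ordinal.lift_iSup_lt_of_lt_cof ?_ hf, le_ciSup hbdd⟩
  rwa [← Ordinal.lift_cof, hκ.cof_ord]

theorem stmt16 (κ : Cardinal.{0}) (hκ : κ.IsRegular)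
    (X : Type u) (uX : X → X → Ordinal) (hX : IsUltrametric κ.ord uX)
    (hc : KappaCompact X (ballTopology κ.ord uX) κ)
    (Y : Type v) (τ : Ordinal) (d : Y → Y → Ordinal) (hY : IsUltrametric τ d)
    (f : X → Y)
    (hf : @Continuous X Y (ballTopology κ.ord uX) (ballTopology τ d) f) :
    UnifCont κ.ord τ uX d f := by
  intro ε hε
  choose r hrκ hr using hX.exists_ball_subset_preimage_ball hκ.ord_pos hY hf hε
  obtain ⟨S, hScard, hS⟩ := hc.exists_small_subcover (fun x => Ball uX (r x) x)
    (fun x => isOpen_ball (hrκ x) x) (fun x => hX.mem_ball_self (hrκ x).le x)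
  obtain ⟨δ, hδκ, hrδ⟩ := hκ.exists_upper_bound_lt_ord (by rwa [Cardinal.lift_uzero])
    (fun x : S => r x) (fun x => hrκ x)
  refine ⟨δ, hδκ, fun a b hab => ?_⟩
  obtain ⟨x, hxS, hax⟩ := hS a
  have hbx : b ∈ Ball uX (r x) x :=
    hX.ball_subset_ball_of_mem hax ((hrδ ⟨x, hxS⟩).trans hab)
  exact hY.le_of_mem_ball (hr x hax) (hr x hbx)
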